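/- arXiv:1711.05452 — 2 statements merged into one kernel-verified Lean document; each statement's English description precedes it below -/
import Mathlib

section
/- Let (K, φ) be a minimal topological dynamical system with discrete spectrum. Then for every x₀ ∈ K the evaluation map δ_{x₀} : E(K, φ) → K, ψ ↦ ψ(x₀), is a homeomorphism satisfying δ_{x₀}(id_K) = x₀ and δ_{x₀}(ψ ∘ φ) = φ(δ_{x₀}(ψ)) for all ψ ∈ E(K, φ); moreover it is the unique homeomorphism Θ : E(K, φ) → K with Θ(id_K) = x₀ and Θ(ψ ∘ φ) = φ(Θ(ψ)) for all ψ ∈ E(K, φ). In particular, (K, φ) is isomorphic to a minimal rotation on a compact abelian topological group. -/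
universe u

/-- A topological dynamical system has discrete spectrum if the linear span of the
eigenvectors of its Koopman operator with unimodular eigenvalues is dense in `C(K)`. -/
def DiscreteSpectrum {K : Type*} [TopologicalSpace K] (φ : K → K) : Prop :=
  Dense (↑(Submodule.span ℂ
    {f : C(K, ℂ) | f ≠ 0 ∧ ∃ lam : ℂ, ‖lam‖ = 1 ∧ ∀ x, f (φ x) = lam * f x}) :
      Set C(K, ℂ))

/-- A topological dynamical system `(S, ψ)` is minimal if it has no nonempty proper closed
invariant subset. -/
def IsMinimalSystem {S : Type*} [TopologicalSpace S] (ψ : S → S) : Prop :=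
  ∀ C : Set S, IsClosed C → Set.MapsTo ψ C C → C.Nonempty → C = Set.univ

/-- The Ellis semigroup of a topological dynamical system: the closure of `{φ^n : n ∈ ℕ}` in
`K → K` with the product (pointwise-convergence) topology. -/
def Ellis {K : Type*} [TopologicalSpace K] (φ : K → K) : Set (K → K) :=
  closure {ψ : K → K | ∃ n : ℕ, ψ = φ^[n]}

/-- An isomorphism of `(K, φ)` with a minimal rotation on a compact abelian topological
group. -/
structure GroupRotationIso (K : Type u) [TopologicalSpace K] (φ : K → K) where
  G : Type u
  [tG : TopologicalSpace G]
  [gG : CommGroup G]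
  [cG : CompactSpace G]
  [tgG : IsTopologicalGroup G]
  a : G
  e : K ≃ₜ G
  equivariant : ∀ x : K, e (φ x) = a * e x
  minimal : IsMinimalSystem fun g : G => a * g

/-!
For a unimodular eigenfunction `f` of `φ` and `ψ = lim φ^[n_i]` in the Ellis semigroup, the
identity `f (φ^[n] y) * f z = f (φ^[n] z) * f y` passes to the limit, so `f ∘ ψ = c_ψ(f) • f`.
By minimality eigenfunctions have constant nonzero modulus, and by discrete spectrum they
separate points; hence `ψ` is determined by `ψ x₀`, elements of `E(K, φ)` commute, and
evaluation at `x₀` is a continuous bijection from the compact space `E(K, φ)` onto `K` (it is onto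
because its image is a closed `φ`-invariant set). The same eigenfunction identity makes
composition and inversion continuous, so `E(K, φ)` is a compact abelian group on which the
rotation by `φ` is conjugate to `(K, φ)`. Uniqueness holds because the iterates are dense.
-/

open Function Set

-- `DiscreteSpectrum φ` is, definitionally, density of the span of this set.
def unimodularEigenfunctions {K : Type*} [TopologicalSpace K] (φ : K → K) : Set C(K, ℂ) :=
  {f : C(K, ℂ) | f ≠ 0 ∧ ∃ c : ℂ, ‖c‖ = 1 ∧ ∀ x, f (φ x) = c * f x}

theorem IsMinimalSystem.of_semiconj {S T : Type*} [TopologicalSpace S] [TopologicalSpace T]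
    {ψ : S → S} {χ : T → T} (e : S ≃ₜ T) (he : Semiconj e ψ χ) (hχ : IsMinimalSystem χ) :
    IsMinimalSystem ψ := by
  intro C hC hCψ hCne
  have himage : e '' C = univ := by
    refine hχ _ (e.isClosedMap C hC) ?_ (hCne.image e)
    rintro _ ⟨s, hs, rfl⟩
    exact ⟨ψ s, hCψ hs, he s⟩
  rw [← e.preimage_image C, himage, preimage_univ]

section Eigenfunctions

variable {K : Type*} [TopologicalSpace K] {φ : K → K}

theorem eigenfunction_iterate {f : C(K, ℂ)} {c : ℂ} (hf : ∀ x, f (φ x) = c * f x) (n : ℕ)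
    (x : K) : f (φ^[n] x) = c ^ n * f x := by
  induction n generalizing x with
  | zero => simp
  | succ n ih => rw [iterate_succ_apply, ih, hf, pow_succ, mul_assoc]

theorem IsMinimalSystem.norm_eigenfunction_eq (hmin : IsMinimalSystem φ) {f : C(K, ℂ)} {c : ℂ}
    (hc : ‖c‖ = 1) (hf : ∀ x, f (φ x) = c * f x) (x y : K) : ‖f x‖ = ‖f y‖ := by
  have hlevel : {z | ‖f z‖ = ‖f y‖} = univ := by
    refine hmin _ (isClosed_eq (map_continuous f).norm continuous_const) (fun z hz => ?_) ⟨y, rfl⟩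
    rw [mem_ofPred_eq, hf, norm_mul, hc, one_mul]
    exact hz
  exact eq_univ_iff_forall.mp hlevel x

theorem IsMinimalSystem.eigenfunction_apply_ne_zero (hmin : IsMinimalSystem φ) {f : C(K, ℂ)}
    (hf : f ∈ unimodularEigenfunctions φ) (x : K) : f x ≠ 0 := by
  obtain ⟨hf0, c, hc, hfc⟩ := hf
  intro hx
  refine hf0 (ContinuousMap.ext fun y => ?_)
  simpa [hx] using hmin.norm_eigenfunction_eq hc hfc y x

variable [CompactSpace K] [T2Space K]

theorem DiscreteSpectrum.eq_of_forall_eigenfunction_apply_eq (hds : DiscreteSpectrum φ)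
    {x y : K} (h : ∀ f ∈ unimodularEigenfunctions φ, f x = f y) : x = y := by
  have heval : ⇑(ContinuousMap.evalCLM ℂ x : C(K, ℂ) →L[ℂ] ℂ) = ContinuousMap.evalCLM ℂ y :=
    (ContinuousLinearMap.continuous _).ext_on hds (ContinuousLinearMap.continuous _)
      (LinearMap.eqOn_span' h)
  by_contra hxy
  obtain ⟨g, hg, hgxy⟩ := separatesPoints_continuous_of_t35Space hxy
  exact hgxy <| Complex.ofReal_injective <|
    congrFun heval ⟨fun z => (g z : ℂ), Complex.continuous_ofReal.comp hg⟩

theorem DiscreteSpectrum.continuous_of_forall_eigenfunction (hds : DiscreteSpectrum φ)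
    {X : Type*} [TopologicalSpace X] {g : X → K}
    (hg : ∀ f ∈ unimodularEigenfunctions φ, Continuous fun x => f (g x)) : Continuous g := by
  have hι : Topology.IsClosedEmbedding
      fun x (f : unimodularEigenfunctions φ) => (f : C(K, ℂ)) x :=
    (continuous_pi fun f : unimodularEigenfunctions φ => map_continuous (f : C(K, ℂ)))
      |>.isClosedEmbedding fun x y hxy => hds.eq_of_forall_eigenfunction_apply_eq fun f hf =>
        congrFun hxy (⟨f, hf⟩ : unimodularEigenfunctions φ)
  exact hι.continuous_iff.2 (continuous_pi fun f => hg f f.2)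

end Eigenfunctions

section Ellis

variable {K : Type*} [TopologicalSpace K] {φ : K → K}

theorem ellis_eq_closure_range : Ellis φ = closure (range fun n : ℕ => φ^[n]) := by
  simp only [Ellis, range, eq_comm]

theorem iterate_mem_ellis (n : ℕ) : φ^[n] ∈ Ellis φ :=
  subset_closure ⟨n, rfl⟩

theorem id_mem_ellis : id ∈ Ellis φ :=
  iterate_mem_ellis 0

theorem self_mem_ellis : φ ∈ Ellis φ :=
  iterate_mem_ellis 1

theorem mapsTo_ellis {F : (K → K) → (K → K)} (hF : Continuous F)
    (h : ∀ n, F φ^[n] ∈ Ellis φ) : MapsTo F (Ellis φ) (Ellis φ) := by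
  have hgen : MapsTo F {ψ | ∃ n, ψ = φ^[n]} (Ellis φ) := by
    rintro _ ⟨n, rfl⟩
    exact h n
  simpa only [Ellis, closure_closure] using hgen.closure hF

theorem iterate_comp_mem_ellis (hφ : Continuous φ) (m : ℕ) {ψ : K → K} (hψ : ψ ∈ Ellis φ) :
    φ^[m] ∘ ψ ∈ Ellis φ :=
  mapsTo_ellis (F := (φ^[m] ∘ ·))
    (continuous_pi fun y => (hφ.iterate m).comp (continuous_apply y))
    (fun n => iterate_add φ m n ▸ iterate_mem_ellis (m + n)) hψ

theorem comp_mem_ellis (hφ : Continuous φ) {ψ χ : K → K} (hψ : ψ ∈ Ellis φ)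
    (hχ : χ ∈ Ellis φ) : ψ ∘ χ ∈ Ellis φ :=
  mapsTo_ellis (F := (· ∘ χ)) (continuous_pi fun y => continuous_apply (χ y))
    (fun n => iterate_comp_mem_ellis hφ n hχ) hψ

theorem denseRange_iterate_ellis :
    DenseRange fun n : ℕ => (⟨φ^[n], iterate_mem_ellis n⟩ : Ellis φ) := by
  rw [DenseRange, Subtype.dense_iff, ← range_comp]
  exact ellis_eq_closure_range.subset

theorem continuous_ellis_apply (x : K) : Continuous fun ψ : Ellis φ => (ψ : K → K) x :=
  (continuous_apply x).comp continuous_subtype_val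

theorem eigenfunction_ellis_apply_mul_eq {f : C(K, ℂ)} {c : ℂ} (hf : ∀ x, f (φ x) = c * f x)
    {ψ : K → K} (hψ : ψ ∈ Ellis φ) (y z : K) : f (ψ y) * f z = f (ψ z) * f y := by
  refine closure_minimal (t := {χ : K → K | f (χ y) * f z = f (χ z) * f y}) ?_
    (isClosed_eq (by fun_prop) (by fun_prop)) hψ
  rintro _ ⟨n, rfl⟩
  simp only [mem_ofPred_eq, eigenfunction_iterate hf]
  ring

theorem eq_apply_of_map_id_of_map_comp [T2Space K] {x₀ : K} {Θ : Ellis φ → K}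
    (hΘ : Continuous Θ) (h_id : ∀ ψ : Ellis φ, (ψ : K → K) = id → Θ ψ = x₀)
    (h_comp : ∀ ψ ψ' : Ellis φ, (ψ' : K → K) = ψ ∘ φ → Θ ψ' = φ (Θ ψ)) (ψ : Ellis φ) :
    Θ ψ = (ψ : K → K) x₀ := by
  refine congrFun (denseRange_iterate_ellis.equalizer hΘ (continuous_ellis_apply x₀)
    (funext fun n => ?_)) ψ
  induction n with
  | zero => exact h_id _ rfl
  | succ n ih =>
    simp only [comp_apply] at ih ⊢
    rw [h_comp ⟨φ^[n], iterate_mem_ellis n⟩ _ (iterate_succ φ n), ih]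
    exact (iterate_succ_apply' φ n x₀).symm

variable [CompactSpace K]

instance : CompactSpace (Ellis φ) :=
  isCompact_iff_compactSpace.mp isClosed_closure.isCompact

variable [T2Space K]

theorem exists_mem_ellis_apply_eq (hφ : Continuous φ) (hmin : IsMinimalSystem φ) (z x : K) :
    ∃ ψ ∈ Ellis φ, ψ z = x := by
  have horbit : (fun ψ : K → K => ψ z) '' Ellis φ = univ := by
    refine hmin _ (isClosed_closure.isCompact.image (continuous_apply z)).isClosed ?_
      ⟨z, id, id_mem_ellis, rfl⟩
    rintro _ ⟨ψ, hψ, rfl⟩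
    exact ⟨φ ∘ ψ, comp_mem_ellis hφ self_mem_ellis hψ, rfl⟩
  exact horbit.ge (mem_univ x)

theorem ellis_eq_of_apply_eq (hmin : IsMinimalSystem φ) (hds : DiscreteSpectrum φ)
    {ψ χ : K → K} (hψ : ψ ∈ Ellis φ) (hχ : χ ∈ Ellis φ) {z : K} (h : ψ z = χ z) : ψ = χ := by
  funext y
  refine hds.eq_of_forall_eigenfunction_apply_eq fun f hf => ?_
  have hfz := hmin.eigenfunction_apply_ne_zero hf z
  obtain ⟨-, c, -, hfc⟩ := hf
  refine mul_right_cancel₀ hfz ?_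
  rw [eigenfunction_ellis_apply_mul_eq hfc hψ, h, eigenfunction_ellis_apply_mul_eq hfc hχ]

theorem ellis_comp_comm (hmin : IsMinimalSystem φ) (hds : DiscreteSpectrum φ)
    {ψ χ : K → K} (hψ : ψ ∈ Ellis φ) (hχ : χ ∈ Ellis φ) : ψ ∘ χ = χ ∘ ψ := by
  funext y
  refine hds.eq_of_forall_eigenfunction_apply_eq fun f hf => ?_
  have hfy := hmin.eigenfunction_apply_ne_zero hf y
  obtain ⟨-, c, -, hfc⟩ := hf
  refine mul_right_cancel₀ hfy ?_
  rw [comp_apply, comp_apply, eigenfunction_ellis_apply_mul_eq hfc hψ (χ y) y,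
    eigenfunction_ellis_apply_mul_eq hfc hχ (ψ y) y, mul_comm]

noncomputable def ellisEvalHomeomorph (hφ : Continuous φ) (hmin : IsMinimalSystem φ)
    (hds : DiscreteSpectrum φ) (x₀ : K) : Ellis φ ≃ₜ K :=
  (continuous_ellis_apply x₀).homeoOfEquivCompactToT2 (f := Equiv.ofBijective _
    ⟨fun ψ χ h => Subtype.ext (ellis_eq_of_apply_eq hmin hds ψ.2 χ.2 h), fun x =>
      let ⟨ψ, hψ, hx⟩ := exists_mem_ellis_apply_eq hφ hmin x₀ x; ⟨⟨ψ, hψ⟩, hx⟩⟩)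

@[simp]
theorem ellisEvalHomeomorph_apply (hφ : Continuous φ) (hmin : IsMinimalSystem φ)
    (hds : DiscreteSpectrum φ) (x₀ : K) (ψ : Ellis φ) :
    ellisEvalHomeomorph hφ hmin hds x₀ ψ = (ψ : K → K) x₀ :=
  rfl

theorem continuous_to_ellis_of_eigenfunction (hφ : Continuous φ) (hmin : IsMinimalSystem φ)
    (hds : DiscreteSpectrum φ) (x₀ : K) {X : Type*} [TopologicalSpace X] {g : X → Ellis φ}
    (hg : ∀ f ∈ unimodularEigenfunctions φ, Continuous fun x => f ((g x : K → K) x₀)) :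
    Continuous g :=
  (ellisEvalHomeomorph hφ hmin hds x₀).isEmbedding.continuous_iff.2
    (hds.continuous_of_forall_eigenfunction hg)

theorem exists_mem_ellis_comp_eq_id [Nonempty K] (hφ : Continuous φ) (hmin : IsMinimalSystem φ)
    (hds : DiscreteSpectrum φ) {ψ : K → K} (hψ : ψ ∈ Ellis φ) : ∃ χ ∈ Ellis φ, χ ∘ ψ = id := by
  obtain ⟨x₀⟩ := ‹Nonempty K›
  obtain ⟨χ, hχ, hχψ⟩ := exists_mem_ellis_apply_eq hφ hmin (ψ x₀) x₀
  exact ⟨χ, hχ, ellis_eq_of_apply_eq hmin hds (comp_mem_ellis hφ hχ hψ) id_mem_ellis hχψ⟩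

noncomputable abbrev ellisCommGroup [Nonempty K] (hφ : Continuous φ) (hmin : IsMinimalSystem φ)
    (hds : DiscreteSpectrum φ) : CommGroup (Ellis φ) where
  mul ψ χ := ⟨ψ ∘ χ, comp_mem_ellis hφ ψ.2 χ.2⟩
  mul_assoc _ _ _ := rfl
  one := ⟨id, id_mem_ellis⟩
  one_mul _ := rfl
  mul_one _ := rfl
  inv ψ := ⟨_, (exists_mem_ellis_comp_eq_id hφ hmin hds ψ.2).choose_spec.1⟩
  inv_mul_cancel ψ := Subtype.ext (exists_mem_ellis_comp_eq_id hφ hmin hds ψ.2).choose_spec.2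
  mul_comm ψ χ := Subtype.ext (ellis_comp_comm hmin hds ψ.2 χ.2)

theorem ellis_isTopologicalGroup [Nonempty K] (hφ : Continuous φ) (hmin : IsMinimalSystem φ)
    (hds : DiscreteSpectrum φ) :
    letI := ellisCommGroup hφ hmin hds
    IsTopologicalGroup (Ellis φ) := by
  let _ := ellisCommGroup hφ hmin hds
  obtain ⟨x₀⟩ := ‹Nonempty K›
  have hev := continuous_ellis_apply (φ := φ) x₀
  refine { continuous_mul := ?_, continuous_inv := ?_ }
  · refine continuous_to_ellis_of_eigenfunction hφ hmin hds x₀ fun f hf => ?_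
    have hfx₀ := hmin.eigenfunction_apply_ne_zero hf x₀
    obtain ⟨-, c, -, hfc⟩ := hf
    refine (((map_continuous f).comp (hev.comp continuous_fst)).mul
      ((map_continuous f).comp (hev.comp continuous_snd))).div_const (f x₀) |>.congr fun p => ?_
    exact (eq_div_of_mul_eq hfx₀ (eigenfunction_ellis_apply_mul_eq hfc p.1.2 _ x₀)).symm
  · refine continuous_to_ellis_of_eigenfunction hφ hmin hds x₀ fun f hf => ?_
    have hfne := hmin.eigenfunction_apply_ne_zero hf
    obtain ⟨-, c, -, hfc⟩ := hf
    refine ((continuous_const (y := f x₀ * f x₀)).div ((map_continuous f).comp hev)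
      fun ψ => hfne _).congr fun ψ => ?_
    have hψ_inv : (ψ : K → K) (((ψ⁻¹ : Ellis φ) : K → K) x₀) = x₀ :=
      congrFun (congrArg Subtype.val (mul_inv_cancel ψ)) x₀
    refine (eq_div_of_mul_eq (hfne _) ?_).symm
    rw [mul_comm, ← eigenfunction_ellis_apply_mul_eq hfc ψ.2, hψ_inv]

end Ellis

noncomputable def ellisGroupRotationIso {K : Type*} [TopologicalSpace K] [CompactSpace K]
    [T2Space K] {φ : K → K} (hφ : Continuous φ) (hmin : IsMinimalSystem φ)
    (hds : DiscreteSpectrum φ) (x₀ : K) : GroupRotationIso K φ :=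
  haveI : Nonempty K := ⟨x₀⟩
  letI := ellisCommGroup hφ hmin hds
  haveI := ellis_isTopologicalGroup hφ hmin hds
  let e := ellisEvalHomeomorph hφ hmin hds x₀
  { G := Ellis φ
    a := ⟨φ, self_mem_ellis⟩
    e := e.symm
    equivariant := fun x => e.injective <| by
      rw [e.apply_symm_apply]
      exact (congrArg φ (e.apply_symm_apply x)).symm
    minimal := IsMinimalSystem.of_semiconj e (fun _ => rfl) hmin }

/-- Let `(K, φ)` be a minimal topological dynamical system with discrete
spectrum and `x₀ ∈ K`.  Then the evaluation map `δ_{x₀} : E(K, φ) → K`, `ψ ↦ ψ x₀`, is a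
homeomorphism with `δ_{x₀}(id) = x₀` and `δ_{x₀}(ψ ∘ φ) = φ(δ_{x₀} ψ)`, and it is the unique
homeomorphism `Θ : E(K, φ) → K` with these two properties.  In particular `(K, φ)` is
isomorphic to a minimal rotation on a compact abelian topological group. -/
theorem evaluation_homeomorphism_of_minimal_discreteSpectrum
    {K : Type u} [TopologicalSpace K] [CompactSpace K] [T2Space K]
    (φ : K → K) (hφ : Continuous φ)
    (hmin : IsMinimalSystem φ) (hds : DiscreteSpectrum φ) (x₀ : K) :
    (∃ h : ↥(Ellis φ) ≃ₜ K,
      (∀ ψ : ↥(Ellis φ), h ψ = (↑ψ : K → K) x₀) ∧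
      (∀ ψ : ↥(Ellis φ), (↑ψ : K → K) = id → h ψ = x₀) ∧
      (∀ ψ ψ' : ↥(Ellis φ), (↑ψ' : K → K) = (↑ψ : K → K) ∘ φ → h ψ' = φ (h ψ)) ∧
      (∀ Θ : ↥(Ellis φ) ≃ₜ K,
        (∀ ψ : ↥(Ellis φ), (↑ψ : K → K) = id → Θ ψ = x₀) →
        (∀ ψ ψ' : ↥(Ellis φ), (↑ψ' : K → K) = (↑ψ : K → K) ∘ φ → Θ ψ' = φ (Θ ψ)) →
        Θ = h)) ∧
    Nonempty (GroupRotationIso K φ) := by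
  refine ⟨⟨ellisEvalHomeomorph hφ hmin hds x₀, fun _ => rfl, fun ψ hψ => congrFun hψ x₀,
    fun ψ ψ' hψ' => ?_, fun Θ hΘ_id hΘ_comp => ?_⟩, ⟨ellisGroupRotationIso hφ hmin hds x₀⟩⟩
  · rw [ellisEvalHomeomorph_apply, ellisEvalHomeomorph_apply, hψ',
      ellis_comp_comm hmin hds ψ.2 self_mem_ellis, comp_apply]
  · exact Homeomorph.ext (eq_apply_of_map_id_of_map_comp Θ.continuous hΘ_id hΘ_comp)
end

section
/- Let (K, φ) be a topological dynamical system with discrete spectrum. Then the evaluation map ev : E(K, φ) × K → K, (ψ, x) ↦ ψ(x), is jointly continuous and surjective, and satisfies ev(φ ∘ ψ, x) = φ(ev(ψ, x)) for all ψ ∈ E(K, φ) and x ∈ K. In other words, (K, φ) is a factor of the product of the group rotation (E(K, φ), ψ ↦ φ ∘ ψ) with the trivial system (K, id_K). -/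
/-!
Every eigenfunction `f` of `φ` satisfies `f ∘ φⁿ = λⁿ f`, and this is the closed
condition `f (ψ x) f x₀ = f (ψ x₀) f x` on `ψ`, so it passes to every `ψ ∈ E(K, φ)`. Choosing
`f x₀ ≠ 0` gives `f (ψ x) = f (ψ x₀) f x / f x₀`, which is jointly continuous in `(ψ, x)`.
Joint continuity of `(ψ, x) ↦ f (ψ x)` is preserved under linear combinations and uniform limits,
so by discrete spectrum it holds for every `f ∈ C(K)`; since `C(K)` separates the points of the
compact Hausdorff space `K`, the evaluation map itself is continuous.
-/

open Filter Topology

theorem continuous_of_forall_continuous_comp {X K : Type*} [TopologicalSpace X]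
    [TopologicalSpace K] [CompactSpace K] [T2Space K] {h : X → K}
    (H : ∀ f : C(K, ℂ), Continuous (f ∘ h)) : Continuous h := by
  let e : K → (C(K, ℂ) → ℂ) := fun x f => f x
  have he_inj : Function.Injective e := by
    intro x y hxy
    by_contra hne
    obtain ⟨f, hf, hfxy⟩ := separatesPoints_continuous_of_t35Space hne
    exact hfxy (Complex.ofReal_injective (congrFun hxy ⟨_, Complex.continuous_ofReal.comp hf⟩))
  have he : IsClosedEmbedding e :=
    (continuous_pi fun f => f.continuous : Continuous e).isClosedEmbedding he_inj
  rw [he.isInducing.continuous_iff]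
  exact continuous_pi H

theorem isClosed_setOf_continuous_comp {X K β : Type*} [TopologicalSpace X]
    [TopologicalSpace K] [CompactSpace K] [UniformSpace β] (g : X → K) :
    IsClosed {f : C(K, β) | Continuous (f ∘ g)} := by
  refine isClosed_of_closure_subset fun f hf => ?_
  have hunif : TendstoUniformly (fun (u : C(K, β)) x => u (g x)) (f ∘ g) (𝓝 f) :=
    (ContinuousMap.tendsto_iff_tendstoUniformly.1 tendsto_id).comp g
  exact hunif.continuous (mem_closure_iff_frequently.1 hf)

def continuousCompSubmodule (𝕜 : Type*) {X K E : Type*} [TopologicalSpace X] [TopologicalSpace K]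
    [Semiring 𝕜] [TopologicalSpace E] [AddCommMonoid E] [ContinuousAdd E]
    [Module 𝕜 E] [ContinuousConstSMul 𝕜 E] (g : X → K) : Submodule 𝕜 C(K, E) where
  carrier := {f | Continuous (f ∘ g)}
  add_mem' hf hg := hf.add hg
  zero_mem' := continuous_const
  smul_mem' c _ hf := hf.const_smul c

namespace Ellis

variable {K : Type*} [TopologicalSpace K] {φ : K → K}

theorem id_mem : id ∈ Ellis φ := subset_closure ⟨0, rfl⟩

theorem comp_mem (hφ : Continuous φ) {ψ : K → K} (hψ : ψ ∈ Ellis φ) : φ ∘ ψ ∈ Ellis φ := by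
  refine map_mem_closure (continuous_pi fun x => hφ.comp (continuous_apply x)) hψ ?_
  rintro _ ⟨n, rfl⟩
  exact ⟨n + 1, (Function.iterate_succ' φ n).symm⟩

theorem eigenfunction_mul_eq {R : Type*} [CommMonoid R] [TopologicalSpace R] [ContinuousMul R]
    [T2Space R] {f : K → R} (hf : Continuous f) {c : R} (hfc : ∀ x, f (φ x) = c * f x)
    {ψ : K → K} (hψ : ψ ∈ Ellis φ) (x y : K) : f (ψ x) * f y = f (ψ y) * f x := by
  have hclosed : IsClosed {χ : K → K | f (χ x) * f y = f (χ y) * f x} :=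
    isClosed_eq ((hf.comp (continuous_apply x)).mul continuous_const)
      ((hf.comp (continuous_apply y)).mul continuous_const)
  refine closure_minimal ?_ hclosed hψ
  rintro _ ⟨n, rfl⟩
  have hiter : ∀ z, f (φ^[n] z) = c ^ n * f z := fun z => by
    rw [← mul_left_iterate_apply]
    exact (Function.Semiconj.iterate_right (f := f) (gb := (c * ·)) hfc n) z
  change f (φ^[n] x) * f y = f (φ^[n] y) * f x
  rw [hiter, hiter, mul_right_comm]

theorem continuous_eigenfunction_comp_eval {𝕜 : Type*} [Field 𝕜] [TopologicalSpace 𝕜]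
    [ContinuousMul 𝕜] [T2Space 𝕜] {f : K → 𝕜} (hf : Continuous f) (hf0 : f ≠ 0) {c : 𝕜}
    (hfc : ∀ x, f (φ x) = c * f x) :
    Continuous fun z : ↥(Ellis φ) × K => f ((z.1 : K → K) z.2) := by
  obtain ⟨x₀, hx₀⟩ : ∃ x₀, f x₀ ≠ 0 := Function.ne_iff.1 hf0
  have hformula : ∀ z : ↥(Ellis φ) × K,
      f ((z.1 : K → K) z.2) = f ((z.1 : K → K) x₀) * f z.2 / f x₀ := fun z => by
    rw [eq_div_iff hx₀]
    exact eigenfunction_mul_eq hf hfc z.1.2 z.2 x₀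
  have hcont : Continuous fun z : ↥(Ellis φ) × K => f ((z.1 : K → K) x₀) * f z.2 / f x₀ :=
    (((hf.comp ((continuous_apply x₀).comp (continuous_subtype_val.comp continuous_fst))).mul
      (hf.comp continuous_snd)).div_const _)
  exact hcont.congr fun z => (hformula z).symm

theorem continuous_eval_of_discreteSpectrum [CompactSpace K] [T2Space K]
    (hds : DiscreteSpectrum φ) :
    Continuous fun z : ↥(Ellis φ) × K => (z.1 : K → K) z.2 := by
  let ev : ↥(Ellis φ) × K → K := fun z => (z.1 : K → K) z.2
  have hspan : Submodule.span ℂ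
      {f : C(K, ℂ) | f ≠ 0 ∧ ∃ lam : ℂ, ‖lam‖ = 1 ∧ ∀ x, f (φ x) = lam * f x} ≤
        continuousCompSubmodule ℂ ev := by
    rw [Submodule.span_le]
    rintro f ⟨hf0, c, -, hfc⟩
    exact continuous_eigenfunction_comp_eval f.continuous (DFunLike.coe_injective.ne hf0) hfc
  refine continuous_of_forall_continuous_comp fun f => ?_
  exact closure_minimal hspan (isClosed_setOf_continuous_comp ev) (hds f)

end Ellis

/-- Let `(K, φ)` be a topological dynamical system with discrete spectrum.
Then the evaluation map `ev : E(K, φ) × K → K`, `(ψ, x) ↦ ψ x`, is jointly continuous and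
surjective and intertwines the rotation `ψ ↦ φ ∘ ψ` on `E(K, φ)` (which maps `E(K, φ)` to
itself) with `φ`; i.e. `(K, φ)` is a factor of the product of the group rotation
`(E(K, φ), ψ ↦ φ ∘ ψ)` with the trivial system `(K, id)`. -/
theorem factor_of_ellis_rotation_times_trivial
    {K : Type*} [TopologicalSpace K] [CompactSpace K] [T2Space K]
    (φ : K → K) (hφ : Continuous φ) (hds : DiscreteSpectrum φ) :
    (∀ ψ ∈ Ellis φ, φ ∘ ψ ∈ Ellis φ) ∧
    Continuous (fun z : ↥(Ellis φ) × K => (↑z.1 : K → K) z.2) ∧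
    Function.Surjective (fun z : ↥(Ellis φ) × K => (↑z.1 : K → K) z.2) ∧
    (∀ (ψ ψ' : ↥(Ellis φ)) (x : K), (↑ψ' : K → K) = φ ∘ (↑ψ : K → K) →
      (↑ψ' : K → K) x = φ ((↑ψ : K → K) x)) :=
  ⟨fun _ hψ => Ellis.comp_mem hφ hψ, Ellis.continuous_eval_of_discreteSpectrum hds,
    fun x => ⟨(⟨id, Ellis.id_mem⟩, x), rfl⟩, fun _ _ x h => congrFun h x⟩
end
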